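/- arXiv:1802.03923 — 2 statements merged into one kernel-verified Lean document; each statement's English description precedes it below -/
import Mathlib

section
/- (Duality Gap Bound, DGB) Fix γ ∈ (0,1], λ > 0, a finite index set T, and symmetric matrices H_t ∈ ℝ^{d×d} (t ∈ T). Let M ⪰ O be a primal feasible solution, let (α, Γ) with α ∈ [0,1]^T and Γ ⪰ O be a dual feasible pair, and let M* be optimal for λ, i.e., M* ⪰ O and P_λ(M*) ≤ P_λ(M') for all M' ⪰ O. Then ‖M* − M‖_F² ≤ 2(P_λ(M) − D_λ(α,Γ))/λ. -/
/-!
Since `M*` minimises `P_λ` over the convex PSD cone and `P_λ` is `λ`-strongly convex (a convex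
loss plus `(λ/2)‖·‖_F²`), comparing `M*` with `θM + (1 - θ)M*` and letting `θ → 0` gives
`(λ/2)‖M − M*‖_F² ≤ P_λ(M) − P_λ(M*)`. Weak duality `D_λ(α, Γ) ≤ P_λ(M*)` finishes, and it comes
from the exact gap formula
`P_λ(M) − D_λ(α, Γ) = Σ_t [ℓ_γ(x_t) − α_t(1 − x_t) + γα_t²/2] + ⟨M, Γ⟩ + (λ/2)‖M − M_λ(α, Γ)‖_F²`
with `x_t = ⟨M, H_t⟩`: the summands are nonnegative by Fenchel–Young for `ℓ_γ`, and `⟨M, Γ⟩ ≥ 0`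
for PSD `M`, `Γ`.
-/

open scoped BigOperators
open scoped Matrix

/-- Frobenius inner product ⟨A,B⟩ = tr(Aᵀ B). -/
noncomputable def frob {d : ℕ} (A B : Matrix (Fin d) (Fin d) ℝ) : ℝ :=
  Matrix.trace (Aᵀ * B)

/-- Frobenius norm ‖A‖_F = √⟨A,A⟩. -/
noncomputable def frobNorm {d : ℕ} (A : Matrix (Fin d) (Fin d) ℝ) : ℝ :=
  Real.sqrt (frob A A)

/-- Smoothed hinge loss ℓ_γ. -/
noncomputable def shinge (γ x : ℝ) : ℝ :=
  if 1 < x then 0 else if 1 - γ ≤ x then (1 - x) ^ 2 / (2 * γ) else 1 - x - γ / 2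

/-- Derivative of the smoothed hinge loss ℓ_γ'. -/
noncomputable def shinge' (γ x : ℝ) : ℝ :=
  if 1 < x then 0 else if 1 - γ ≤ x then -(1 - x) / γ else -1

/-- Primal objective P_λ(M) = Σ_t ℓ_γ(⟨M,H_t⟩) + (λ/2)‖M‖_F². -/
noncomputable def Pobj {d : ℕ} {ι : Type*} (γ lam : ℝ) (T : Finset ι)
    (H : ι → Matrix (Fin d) (Fin d) ℝ) (M : Matrix (Fin d) (Fin d) ℝ) : ℝ :=
  (∑ t ∈ T, shinge γ (frob M (H t))) + lam / 2 * frobNorm M ^ 2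

/-- Gradient ∇P_λ(M) = Σ_t ℓ_γ'(⟨M,H_t⟩) H_t + λ M. -/
noncomputable def gradP {d : ℕ} {ι : Type*} (γ lam : ℝ) (T : Finset ι)
    (H : ι → Matrix (Fin d) (Fin d) ℝ) (M : Matrix (Fin d) (Fin d) ℝ) :
    Matrix (Fin d) (Fin d) ℝ :=
  (∑ t ∈ T, shinge' γ (frob M (H t)) • H t) + lam • M

/-- M_λ(α,Γ) = (1/λ)(Σ_t α_t H_t + Γ). -/
noncomputable def Mlam {d : ℕ} {ι : Type*} (lam : ℝ) (T : Finset ι)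
    (H : ι → Matrix (Fin d) (Fin d) ℝ) (α : ι → ℝ) (Γ : Matrix (Fin d) (Fin d) ℝ) :
    Matrix (Fin d) (Fin d) ℝ :=
  (1 / lam) • ((∑ t ∈ T, α t • H t) + Γ)

/-- Dual objective D_λ(α,Γ) = −(γ/2)‖α‖₂² + Σ_t α_t − (λ/2)‖M_λ(α,Γ)‖_F². -/
noncomputable def Dobj {d : ℕ} {ι : Type*} (γ lam : ℝ) (T : Finset ι)
    (H : ι → Matrix (Fin d) (Fin d) ℝ) (α : ι → ℝ) (Γ : Matrix (Fin d) (Fin d) ℝ) : ℝ :=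
  -(γ / 2) * (∑ t ∈ T, α t ^ 2) + (∑ t ∈ T, α t) -
    lam / 2 * frobNorm (Mlam lam T H α Γ) ^ 2

section Frobenius

variable {d : ℕ} (A B C : Matrix (Fin d) (Fin d) ℝ)

lemma frob_eq_sum : frob A B = ∑ i, ∑ j, A i j * B i j := by
  simp only [frob, Matrix.trace, Matrix.diag, Matrix.mul_apply, Matrix.transpose_apply]
  exact Finset.sum_comm

lemma frob_comm : frob A B = frob B A := by
  rw [frob, frob, ← Matrix.trace_transpose, Matrix.transpose_mul, Matrix.transpose_transpose]

lemma frob_add_left : frob (A + B) C = frob A C + frob B C := by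
  simp [frob, Matrix.add_mul, Matrix.trace_add]

lemma frob_add_right : frob A (B + C) = frob A B + frob A C := by
  simp [frob, Matrix.mul_add, Matrix.trace_add]

lemma frob_sub_left : frob (A - B) C = frob A C - frob B C := by
  simp [frob, Matrix.sub_mul, Matrix.trace_sub]

lemma frob_sub_right : frob A (B - C) = frob A B - frob A C := by
  simp [frob, Matrix.mul_sub, Matrix.trace_sub]

lemma frob_smul_left (c : ℝ) : frob (c • A) B = c * frob A B := by
  simp [frob, Matrix.trace_smul]

lemma frob_smul_right (c : ℝ) : frob A (c • B) = c * frob A B := by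
  simp [frob, Matrix.trace_smul]

lemma frob_sum_right {ι : Type*} (T : Finset ι) (f : ι → Matrix (Fin d) (Fin d) ℝ) :
    frob A (∑ t ∈ T, f t) = ∑ t ∈ T, frob A (f t) := by
  simp [frob, Matrix.mul_sum, Matrix.trace_sum]

lemma frob_self_nonneg : 0 ≤ frob A A := by
  rw [frob_eq_sum]
  exact Finset.sum_nonneg fun i _ => Finset.sum_nonneg fun j _ => mul_self_nonneg _

lemma frobNorm_sq : frobNorm A ^ 2 = frob A A :=
  Real.sq_sqrt (frob_self_nonneg A)

lemma frobNorm_sub_sq : frobNorm (A - B) ^ 2 = frob A A - 2 * frob A B + frob B B := by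
  simp only [frobNorm_sq, frob_sub_left, frob_sub_right, frob_comm B A]
  ring

lemma frobNorm_sub_comm : frobNorm (A - B) = frobNorm (B - A) := by
  rw [← neg_sub, frobNorm, frobNorm, frob_eq_sum, frob_eq_sum]
  simp only [Matrix.neg_apply, neg_mul_neg]

lemma frobNorm_convexComb_sq (θ : ℝ) :
    frobNorm (θ • A + (1 - θ) • B) ^ 2 =
      θ * frobNorm A ^ 2 + (1 - θ) * frobNorm B ^ 2 - θ * (1 - θ) * frobNorm (A - B) ^ 2 := by
  rw [frobNorm_sub_sq]
  simp only [frobNorm_sq, frob_add_left, frob_add_right, frob_smul_left,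
    frob_smul_right, frob_comm B A]
  ring

/-- `⟨A, B⟩ = 1ᵀ (A ⊙ B) 1`, so this is the Schur product theorem. -/
lemma frob_nonneg_of_posSemidef {A B : Matrix (Fin d) (Fin d) ℝ} (hA : A.PosSemidef)
    (hB : B.PosSemidef) : 0 ≤ frob A B := by
  simpa [frob_eq_sum, dotProduct, Matrix.mulVec] using
    (hA.hadamard hB).dotProduct_mulVec_nonneg (fun _ => 1)

end Frobenius

lemma Matrix.convex_setOf_posSemidef {n : Type*} [Fintype n] :
    Convex ℝ {A : Matrix n n ℝ | A.PosSemidef} :=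
  fun _ hA _ hB _ _ ha hb _ => (hA.smul ha).add (hB.smul hb)

section SmoothedHinge

variable {γ : ℝ}

lemma mul_one_sub_sub_le_shinge (hγ : 0 < γ) {a : ℝ} (ha₀ : 0 ≤ a) (ha₁ : a ≤ 1) (x : ℝ) :
    a * (1 - x) - γ * a ^ 2 / 2 ≤ shinge γ x := by
  unfold shinge
  split_ifs with h₁ h₂
  · nlinarith [mul_nonneg hγ.le (mul_self_nonneg a)]
  · rw [le_div_iff₀ (by positivity)]
    nlinarith [sq_nonneg ((1 - x) - γ * a)]
  · have hx : γ * (1 + a) / 2 ≤ 1 - x := by nlinarith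
    nlinarith [mul_nonneg (sub_nonneg.2 ha₁) (sub_nonneg.2 hx)]

lemma exists_shinge_eq (hγ : 0 < γ) (x : ℝ) :
    ∃ a, 0 ≤ a ∧ a ≤ 1 ∧ shinge γ x = a * (1 - x) - γ * a ^ 2 / 2 := by
  unfold shinge
  split_ifs with h₁ h₂
  · exact ⟨0, le_rfl, zero_le_one, by ring⟩
  · refine ⟨(1 - x) / γ, div_nonneg (by linarith) hγ.le, (div_le_one hγ).2 (by linarith), ?_⟩
    field_simp
    ring
  · exact ⟨1, zero_le_one, le_rfl, by ring⟩

/-- `ℓ_γ(x) = max_{a ∈ [0,1]} (a(1 - x) - γa²/2)` is a supremum of affine functions. -/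
lemma convexOn_shinge (hγ : 0 < γ) : ConvexOn ℝ Set.univ (shinge γ) := by
  refine ⟨convex_univ, fun x _ y _ θ η hθ hη hθη => ?_⟩
  obtain rfl : η = 1 - θ := by linarith
  obtain ⟨a, ha₀, ha₁, hmax⟩ := exists_shinge_eq hγ (θ • x + (1 - θ) • y)
  have hx := mul_one_sub_sub_le_shinge hγ ha₀ ha₁ x
  have hy := mul_one_sub_sub_le_shinge hγ ha₀ ha₁ y
  simp only [smul_eq_mul] at hmax ⊢
  rw [hmax, show a * (1 - (θ * x + (1 - θ) * y)) - γ * a ^ 2 / 2 =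
    θ * (a * (1 - x) - γ * a ^ 2 / 2) + (1 - θ) * (a * (1 - y) - γ * a ^ 2 / 2) by ring]
  gcongr

end SmoothedHinge

section Objectives

variable {d : ℕ} {ι : Type*} {γ lam : ℝ} {T : Finset ι} {H : ι → Matrix (Fin d) (Fin d) ℝ}

lemma Pobj_convexComb_le (hγ : 0 < γ) (A B : Matrix (Fin d) (Fin d) ℝ) {θ : ℝ} (hθ₀ : 0 ≤ θ)
    (hθ₁ : θ ≤ 1) :
    Pobj γ lam T H (θ • A + (1 - θ) • B) ≤ θ * Pobj γ lam T H A + (1 - θ) * Pobj γ lam T H B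
      - lam / 2 * (θ * (1 - θ) * frobNorm (A - B) ^ 2) := by
  have hloss : ∀ t ∈ T, shinge γ (frob (θ • A + (1 - θ) • B) (H t)) ≤
      θ * shinge γ (frob A (H t)) + (1 - θ) * shinge γ (frob B (H t)) := fun t _ => by
    rw [frob_add_left, frob_smul_left, frob_smul_left]
    exact (convexOn_shinge hγ).2 trivial trivial hθ₀ (sub_nonneg.2 hθ₁) (by ring)
  have hsum := Finset.sum_le_sum hloss
  rw [Finset.sum_add_distrib, ← Finset.mul_sum, ← Finset.mul_sum] at hsum
  unfold Pobj
  rw [frobNorm_convexComb_sq]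
  linarith

lemma Pobj_sub_Dobj (hlam : lam ≠ 0) (M : Matrix (Fin d) (Fin d) ℝ) (α : ι → ℝ)
    (Γ : Matrix (Fin d) (Fin d) ℝ) :
    Pobj γ lam T H M - Dobj γ lam T H α Γ =
      ∑ t ∈ T, (shinge γ (frob M (H t)) - (α t * (1 - frob M (H t)) - γ * α t ^ 2 / 2))
        + frob M Γ + lam / 2 * frobNorm (M - Mlam lam T H α Γ) ^ 2 := by
  have hlink : lam * frob M (Mlam lam T H α Γ) = ∑ t ∈ T, α t * frob M (H t) + frob M Γ := by
    simp only [Mlam, frob_smul_right, frob_add_right, frob_sum_right]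
    field_simp
  unfold Pobj Dobj
  rw [frobNorm_sub_sq, frobNorm_sq, frobNorm_sq]
  simp only [Finset.sum_sub_distrib, mul_sub, mul_one, ← Finset.sum_div, ← Finset.mul_sum]
  linear_combination hlink

lemma Dobj_le_Pobj (hγ : 0 < γ) (hlam : 0 < lam) {M : Matrix (Fin d) (Fin d) ℝ}
    (hM : M.PosSemidef) {α : ι → ℝ} (hα : ∀ t ∈ T, 0 ≤ α t ∧ α t ≤ 1)
    {Γ : Matrix (Fin d) (Fin d) ℝ} (hΓ : Γ.PosSemidef) :
    Dobj γ lam T H α Γ ≤ Pobj γ lam T H M := by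
  have hloss : 0 ≤ ∑ t ∈ T,
      (shinge γ (frob M (H t)) - (α t * (1 - frob M (H t)) - γ * α t ^ 2 / 2)) :=
    Finset.sum_nonneg fun t ht => sub_nonneg.2 <|
      mul_one_sub_sub_le_shinge hγ (hα t ht).1 (hα t ht).2 _
  have hgap := Pobj_sub_Dobj (γ := γ) (T := T) (H := H) hlam.ne' M α Γ
  linarith [frob_nonneg_of_posSemidef hM hΓ,
    mul_nonneg (half_pos hlam).le (sq_nonneg (frobNorm (M - Mlam lam T H α Γ)))]

end Objectives

open Filter Topology in
lemma le_of_forall_one_sub_mul_le {a b : ℝ} (h : ∀ θ ∈ Set.Ioc (0 : ℝ) 1, (1 - θ) * a ≤ b) :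
    a ≤ b := by
  have hlim : Tendsto (fun θ : ℝ => (1 - θ) * a) (𝓝[>] 0) (𝓝 a) :=
    tendsto_nhdsWithin_of_tendsto_nhds <|
      Continuous.tendsto' (f := fun θ : ℝ => (1 - θ) * a) (by fun_prop) 0 a (by simp)
  exact le_of_tendsto hlim (eventually_of_mem (Ioc_mem_nhdsGT zero_lt_one) h)

lemma IsMinOn.le_sub_of_convexComb_le {E : Type*} [AddCommGroup E] [Module ℝ E] {s : Set E}
    {f : E → ℝ} {x y : E} {q : ℝ} (hs : Convex ℝ s) (hx : x ∈ s) (hy : y ∈ s)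
    (hmin : IsMinOn f s y)
    (hf : ∀ θ ∈ Set.Ioc (0 : ℝ) 1,
      f (θ • x + (1 - θ) • y) ≤ θ * f x + (1 - θ) * f y - θ * (1 - θ) * q) :
    q ≤ f x - f y := by
  refine le_of_forall_one_sub_mul_le fun θ hθ => ?_
  have hopt : f y ≤ f (θ • x + (1 - θ) • y) :=
    hmin (hs hx hy hθ.1.le (sub_nonneg.2 hθ.2) (by ring))
  have hscaled : θ * ((1 - θ) * q) ≤ θ * (f x - f y) := by linarith [hf θ hθ]
  exact le_of_mul_le_mul_left hscaled hθ.1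

theorem duality_gap_bound_general {d : ℕ} {ι : Type*} (γ lam : ℝ)
    (hγ : 0 < γ) (hlam : 0 < lam)
    (T : Finset ι) (H : ι → Matrix (Fin d) (Fin d) ℝ)
    (M Mstar : Matrix (Fin d) (Fin d) ℝ) (α : ι → ℝ) (Γ : Matrix (Fin d) (Fin d) ℝ)
    (hM : M.PosSemidef)
    (hα : ∀ t ∈ T, 0 ≤ α t ∧ α t ≤ 1) (hΓ : Γ.PosSemidef)
    (hMstar : Mstar.PosSemidef)
    (hopt : ∀ M' : Matrix (Fin d) (Fin d) ℝ, M'.PosSemidef →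
      Pobj γ lam T H Mstar ≤ Pobj γ lam T H M') :
    frobNorm (Mstar - M) ^ 2 ≤ 2 * (Pobj γ lam T H M - Dobj γ lam T H α Γ) / lam := by
  have hgrowth : lam / 2 * frobNorm (M - Mstar) ^ 2 ≤ Pobj γ lam T H M - Pobj γ lam T H Mstar :=
    IsMinOn.le_sub_of_convexComb_le Matrix.convex_setOf_posSemidef hM hMstar hopt
      fun θ hθ => by
        have := Pobj_convexComb_le (lam := lam) (T := T) (H := H) hγ M Mstar hθ.1.le hθ.2
        linarith
  have hweak : Dobj γ lam T H α Γ ≤ Pobj γ lam T H Mstar := Dobj_le_Pobj hγ hlam hMstar hα hΓ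
  rw [frobNorm_sub_comm, le_div_iff₀ hlam]
  linarith

/-- Duality Gap Bound (DGB). -/
theorem duality_gap_bound {d : ℕ} {ι : Type*} (γ lam : ℝ)
    (hγ : 0 < γ) (hγ1 : γ ≤ 1) (hlam : 0 < lam)
    (T : Finset ι) (H : ι → Matrix (Fin d) (Fin d) ℝ)
    (hH : ∀ t ∈ T, (H t).IsSymm)
    (M Mstar : Matrix (Fin d) (Fin d) ℝ) (α : ι → ℝ) (Γ : Matrix (Fin d) (Fin d) ℝ)
    (hM : M.PosSemidef)
    (hα : ∀ t ∈ T, 0 ≤ α t ∧ α t ≤ 1) (hΓ : Γ.PosSemidef)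
    (hMstar : Mstar.PosSemidef)
    (hopt : ∀ M' : Matrix (Fin d) (Fin d) ℝ, M'.PosSemidef →
      Pobj γ lam T H Mstar ≤ Pobj γ lam T H M') :
    frobNorm (Mstar - M) ^ 2 ≤ 2 * (Pobj γ lam T H M - Dobj γ lam T H α Γ) / lam :=
  duality_gap_bound_general γ lam hγ hlam T H M Mstar α Γ hM hα hΓ hMstar hopt
end

section
/- (Relationship between DGB and RPB) Fix γ ∈ (0,1], a finite index set T, symmetric matrices H_t ∈ ℝ^{d×d} (t ∈ T), and λ₀, λ₁ > 0. Let α* ∈ [0,1]^T and Γ* ⪰ O be dual feasible, set M₀* := M_{λ₀}(α*, Γ*), and suppose strong duality holds at λ₀: P_{λ₀}(M₀*) = D_{λ₀}(α*, Γ*). Define the RPB radius r_RPB := (|λ₀−λ₁|/(2λ₁))‖M₀*‖_F and center Q_RPB := ((λ₀+λ₁)/(2λ₁))M₀*, and the DGB radius r_DGB := √(2(P_{λ₁}(M₀*) − D_{λ₁}(α*, Γ*))/λ₁) with center M₀*. Then r_DGB = 2·r_RPB, ‖M₀* − Q_RPB‖_F = r_RPB, and the closed Frobenius ball {X : ‖X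 − Q_RPB‖_F ≤ r_RPB} is contained in the closed Frobenius ball {X : ‖X − M₀*‖_F ≤ r_DGB}. -/
open scoped BigOperators
open scoped Matrix

/-!
Since `M_λ(α, Γ)` scales like `1/λ`, we have `M_{λ₁}(α*, Γ*) = (λ₀/λ₁) M₀*`, and moving the
regularization parameter from `λ₀` to `λ₁` changes the duality gap at `(M₀*, α*, Γ*)` by exactly
`((λ₁ - λ₀)² / (2λ₁)) ‖M₀*‖²_F`, whatever the loss terms are. Strong duality at `λ₀` makes this
the whole gap at `λ₁`, so `r_DGB = (|λ₀ - λ₁| / λ₁) ‖M₀*‖_F = 2 r_RPB`. Moreover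
`M₀* - Q_RPB = ((λ₁ - λ₀) / (2λ₁)) M₀*` has norm `r_RPB`, and the triangle inequality puts the
RPB ball inside the ball of twice its radius about `M₀*`.
-/

section Frobenius

attribute [local instance] Matrix.frobeniusNormedAddCommGroup Matrix.frobeniusNormedSpace

variable {d : ℕ}

theorem frob_self_eq_sum_sq (A : Matrix (Fin d) (Fin d) ℝ) :
    frob A A = ∑ i, ∑ j, A i j ^ 2 := by
  simp only [frob, Matrix.trace, Matrix.diag, Matrix.mul_apply, Matrix.transpose_apply, sq]
  exact Finset.sum_comm

theorem frobNorm_eq_norm (A : Matrix (Fin d) (Fin d) ℝ) : frobNorm A = ‖A‖ := by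
  rw [frobNorm, frob_self_eq_sum_sq, Matrix.frobenius_norm_def, Real.sqrt_eq_rpow]
  simp only [Real.norm_eq_abs, Real.rpow_two, sq_abs]

theorem frobNorm_smul (c : ℝ) (A : Matrix (Fin d) (Fin d) ℝ) :
    frobNorm (c • A) = |c| * frobNorm A := by
  simp only [frobNorm_eq_norm, norm_smul, Real.norm_eq_abs]

theorem setOf_frobNorm_sub_le_subset {M Q : Matrix (Fin d) (Fin d) ℝ} {r : ℝ}
    (h : frobNorm (M - Q) ≤ r) :
    {X | frobNorm (X - Q) ≤ r} ⊆ {X | frobNorm (X - M) ≤ 2 * r} := by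
  simp only [frobNorm_eq_norm, ← dist_eq_norm] at h ⊢
  exact Metric.closedBall_subset_closedBall' (by rw [dist_comm]; linarith)

end Frobenius

section Duality

variable {d : ℕ} {ι : Type*} (T : Finset ι) (H : ι → Matrix (Fin d) (Fin d) ℝ) (α : ι → ℝ)
  (Γ : Matrix (Fin d) (Fin d) ℝ)

theorem Mlam_eq_smul_Mlam {lam0 : ℝ} (hlam0 : lam0 ≠ 0) (lam1 : ℝ) :
    Mlam lam1 T H α Γ = (lam0 / lam1) • Mlam lam0 T H α Γ := by
  rw [Mlam, Mlam, smul_smul]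
  congr 1
  field_simp

theorem Pobj_Mlam_sub_Dobj {lam0 lam1 : ℝ} (hlam0 : lam0 ≠ 0) (hlam1 : lam1 ≠ 0) (γ : ℝ) :
    Pobj γ lam1 T H (Mlam lam0 T H α Γ) - Dobj γ lam1 T H α Γ =
      Pobj γ lam0 T H (Mlam lam0 T H α Γ) - Dobj γ lam0 T H α Γ +
        (lam1 - lam0) ^ 2 / (2 * lam1) * frobNorm (Mlam lam0 T H α Γ) ^ 2 := by
  simp only [Pobj, Dobj]
  rw [Mlam_eq_smul_Mlam T H α Γ hlam0 lam1, frobNorm_smul, mul_pow, sq_abs]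
  field_simp
  ring

end Duality

theorem dgb_vs_rpb_general {d : ℕ} {ι : Type*} (γ lam0 lam1 : ℝ)
    (hlam0 : 0 < lam0) (hlam1 : 0 < lam1)
    (T : Finset ι) (H : ι → Matrix (Fin d) (Fin d) ℝ)
    (αstar : ι → ℝ) (Γstar : Matrix (Fin d) (Fin d) ℝ)
    (hsd : Pobj γ lam0 T H (Mlam lam0 T H αstar Γstar) = Dobj γ lam0 T H αstar Γstar) :
    let M0star := Mlam lam0 T H αstar Γstar
    let rRPB := |lam0 - lam1| / (2 * lam1) * frobNorm M0star
    let Qrpb := ((lam0 + lam1) / (2 * lam1)) • M0star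
    let rDGB := Real.sqrt (2 * (Pobj γ lam1 T H M0star - Dobj γ lam1 T H αstar Γstar) / lam1)
    rDGB = 2 * rRPB ∧
    frobNorm (M0star - Qrpb) = rRPB ∧
    {X : Matrix (Fin d) (Fin d) ℝ | frobNorm (X - Qrpb) ≤ rRPB} ⊆
      {X : Matrix (Fin d) (Fin d) ℝ | frobNorm (X - M0star) ≤ rDGB} := by
  intro M0 rRPB Q rDGB
  have hgap : Pobj γ lam1 T H M0 - Dobj γ lam1 T H αstar Γstar =
      (lam1 - lam0) ^ 2 / (2 * lam1) * frobNorm M0 ^ 2 := by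
    rw [Pobj_Mlam_sub_Dobj T H αstar Γstar hlam0.ne' hlam1.ne', hsd, sub_self, zero_add]
  have hDGB : rDGB = 2 * rRPB := by
    have hsq : 2 * ((lam1 - lam0) ^ 2 / (2 * lam1) * frobNorm M0 ^ 2) / lam1 =
        (2 * rRPB) ^ 2 := by
      simp only [rRPB, mul_pow, div_pow, sq_abs]
      field_simp
      ring
    simp only [rDGB, hgap, hsq]
    rw [Real.sqrt_sq]
    exact mul_nonneg zero_le_two (mul_nonneg (by positivity) (Real.sqrt_nonneg _))
  have hcenter : frobNorm (M0 - Q) = rRPB := by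
    have hcoef : (lam1 - lam0) / (2 * lam1) = 1 - (lam0 + lam1) / (2 * lam1) := by
      field_simp
      ring
    have hdiff : M0 - Q = ((lam1 - lam0) / (2 * lam1)) • M0 := by
      rw [hcoef, sub_smul, one_smul]
    rw [hdiff, frobNorm_smul, abs_div, abs_sub_comm, abs_of_pos (by positivity : 0 < 2 * lam1)]
  exact ⟨hDGB, hcenter, hDGB ▸ setOf_frobNorm_sub_le_subset hcenter.le⟩

/-- Relationship between DGB and RPB. -/
theorem dgb_vs_rpb {d : ℕ} {ι : Type*} (γ lam0 lam1 : ℝ)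
    (hγ : 0 < γ) (hγ1 : γ ≤ 1) (hlam0 : 0 < lam0) (hlam1 : 0 < lam1)
    (T : Finset ι) (H : ι → Matrix (Fin d) (Fin d) ℝ)
    (hH : ∀ t ∈ T, (H t).IsSymm)
    (αstar : ι → ℝ) (Γstar : Matrix (Fin d) (Fin d) ℝ)
    (hα : ∀ t ∈ T, 0 ≤ αstar t ∧ αstar t ≤ 1) (hΓ : Γstar.PosSemidef)
    (hsd : Pobj γ lam0 T H (Mlam lam0 T H αstar Γstar) = Dobj γ lam0 T H αstar Γstar) :
    let M0star := Mlam lam0 T H αstar Γstar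
    let rRPB := |lam0 - lam1| / (2 * lam1) * frobNorm M0star
    let Qrpb := ((lam0 + lam1) / (2 * lam1)) • M0star
    let rDGB := Real.sqrt (2 * (Pobj γ lam1 T H M0star - Dobj γ lam1 T H αstar Γstar) / lam1)
    rDGB = 2 * rRPB ∧
    frobNorm (M0star - Qrpb) = rRPB ∧
    {X : Matrix (Fin d) (Fin d) ℝ | frobNorm (X - Qrpb) ≤ rRPB} ⊆
      {X : Matrix (Fin d) (Fin d) ℝ | frobNorm (X - M0star) ≤ rDGB} :=
  dgb_vs_rpb_general γ lam0 lam1 hlam0 hlam1 T H αstar Γstar hsd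
end
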